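/- Fix x ∈ ℝ with x ≠ 0. There exist constants c, C > 0 and δ > 0 (depending only on x) such that for every σ ∈ (0,1) with 1 − σ² ≤ δ: c·(1−σ²) ≤ sgn(x)·(Φ_σ(x) − Φ(x)) ≤ C·(1−σ²), where Φ is the CDF of N(0,1) and Φ_σ is the CDF of N(0,σ²). -/

import Mathlib

open MeasureTheory ProbabilityTheory Filter

noncomputable section

/-- The standard Gaussian measure `N(0, I_d)` on `ℝ^d`. -/
def stdGaussian (d : ℕ) : Measure (Fin d → ℝ) :=
  Measure.pi fun _ => gaussianReal 0 1

/-- The law of `n` i.i.d. samples from `N(0, I_d)`. -/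
def iidGaussian (d n : ℕ) : Measure (Fin n → Fin d → ℝ) :=
  Measure.pi fun _ => stdGaussian d

/-- Euclidean inner product on `ℝ^d`. -/
def dotp {d : ℕ} (x y : Fin d → ℝ) : ℝ := ∑ i, x i * y i

/-- `τ` is the threshold for edge-density `p` in dimension `d`, i.e.
`P(d^{-1/2}⟨x, y⟩ ≤ τ) = p` for independent `x, y ~ N(0, I_d)`. -/
def IsThreshold (d : ℕ) (p τ : ℝ) : Prop :=
  ((stdGaussian d).prod (stdGaussian d))
    {z | dotp z.1 z.2 / Real.sqrt d ≤ τ} = ENNReal.ofReal p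

/-- The Bernoulli(p) distribution, as a measure on `ℝ` supported on `{0, 1}`. -/
def bern (p : ℝ) : Measure ℝ :=
  ENNReal.ofReal p • Measure.dirac 1 + ENNReal.ofReal (1 - p) • Measure.dirac 0

instance bern.instIsFiniteMeasure (p : ℝ) : IsFiniteMeasure (bern p) := by
  refine ⟨?_⟩
  simp only [bern, Measure.add_apply, Measure.smul_apply, smul_eq_mul,
    Measure.dirac_apply_of_mem (Set.mem_univ _), mul_one]
  exact ENNReal.add_lt_top.2 ⟨ENNReal.ofReal_lt_top, ENNReal.ofReal_lt_top⟩

/-- `M(n, m, p)`: the law of an `n × m` matrix with i.i.d. Bernoulli(p) entries. -/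
def MDist (n m : ℕ) (p : ℝ) : Measure (Fin n → Fin m → ℝ) :=
  Measure.pi fun _ => Measure.pi fun _ => bern p

/-- `W(n, m, p, d)` (with connection threshold `τ`): the law of the bipartite
Gaussian random geometric graph `W_{u,v} = 1(d^{-1/2}⟨x_u, x'_v⟩ ≤ τ)`. -/
def WDist (n m : ℕ) (d : ℕ) (τ : ℝ) : Measure (Fin n → Fin m → ℝ) :=
  ((iidGaussian d n).prod (iidGaussian d m)).map
    (fun X => fun u v => if dotp (X.1 u) (X.2 v) / Real.sqrt d ≤ τ then (1 : ℝ) else 0)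

/-- `W_M(n, m, p, d)`: the masked model with a fixed (known) mask `Mk`,
`W ⊙ Mk + B ⊙ (1 - Mk)` with `W ~ W(n,m,p,d)` and `B ~ M(n,m,p)` independent. -/
def WMask (n m : ℕ) (p : ℝ) (d : ℕ) (τ : ℝ) (Mk : Fin n → Fin m → ℝ) :
    Measure (Fin n → Fin m → ℝ) :=
  ((WDist n m d τ).prod (MDist n m p)).map
    (fun z => fun u v => Mk u v * z.1 u v + (1 - Mk u v) * z.2 u v)

/-- `W(n, m, q, p, d)`: the masked model with an unknown random Bernoulli(q) mask,
`W ⊙ M + B ⊙ (1 - M)` with `W ~ W(n,m,p,d)`, `M ~ Bern(q)^{n×m}`, `B ~ M(n,m,p)`,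
all independent. -/
def WNoisy (n m : ℕ) (q p : ℝ) (d : ℕ) (τ : ℝ) : Measure (Fin n → Fin m → ℝ) :=
  ((MDist n m q).prod ((WDist n m d τ).prod (MDist n m p))).map
    (fun z => fun u v => z.1 u v * z.2.1 u v + (1 - z.1 u v) * z.2.2 u v)

/-- Total variation distance between two measures. -/
def tvDist {Ω : Type*} [MeasurableSpace Ω] (μ ν : Measure Ω) : ℝ :=
  ⨆ s : {s : Set Ω // MeasurableSet s}, |(μ s.1).toReal - (ν s.1).toReal|

end

/-- The CDF of the centered Gaussian distribution `N(0, σ²)` on `ℝ`. -/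
noncomputable def gaussCDF (σ x : ℝ) : ℝ :=
  ((gaussianReal 0 (σ ^ 2).toNNReal) (Set.Iic x)).toReal

/-! Since `Φ_σ(x) = Φ(x/σ)` and the standard Gaussian is symmetric, `sgn(x)·(Φ_σ(x) − Φ(x))` is
the standard Gaussian mass of `(|x|, |x|/σ]`. That interval has length
`|x|(1 − σ²)/(σ(1 + σ))`, comparable to `1 − σ²` once `σ² ≥ 1/2`, and on it the density lies
between its values at `2|x|` and `|x|`. -/

open Set
open scoped NNReal

lemma gaussianPDFReal_le_of_abs_sub_le (μ : ℝ) (v : ℝ≥0) {s t : ℝ} (h : |s - μ| ≤ |t - μ|) :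
    gaussianPDFReal μ v t ≤ gaussianPDFReal μ v s := by
  have hsq : (s - μ) ^ 2 ≤ (t - μ) ^ 2 := sq_le_sq.2 h
  rw [gaussianPDFReal, gaussianPDFReal]
  gcongr

lemma gaussianReal_real_Ioc_le {μ : ℝ} {v : ℝ≥0} (hv : v ≠ 0) {a b : ℝ} (hμa : μ ≤ a)
    (hab : a ≤ b) :
    (b - a) * gaussianPDFReal μ v b ≤ (gaussianReal μ v).real (Ioc a b) ∧
      (gaussianReal μ v).real (Ioc a b) ≤ (b - a) * gaussianPDFReal μ v a := by
  have hint : (gaussianReal μ v).real (Ioc a b) = ∫ t in a..b, gaussianPDFReal μ v t := by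
    rw [measureReal_def, gaussianReal_apply_eq_integral μ hv,
      ENNReal.toReal_ofReal (setIntegral_nonneg measurableSet_Ioc fun t _ ↦
        gaussianPDFReal_nonneg μ v t), intervalIntegral.integral_of_le hab]
  have hpdf : IntervalIntegrable (gaussianPDFReal μ v) volume a b :=
    (integrable_gaussianPDFReal μ v).intervalIntegrable
  have habs {t : ℝ} (ht : t ∈ Icc a b) : |t - μ| = t - μ := abs_of_nonneg (by linarith [ht.1])
  rw [hint]
  constructor
  · simpa using intervalIntegral.integral_mono_on hab intervalIntegrable_const hpdf
      fun t ht ↦ gaussianPDFReal_le_of_abs_sub_le μ v <| by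
        rw [habs ht, habs (right_mem_Icc.2 hab)]; linarith [ht.2]
  · simpa using intervalIntegral.integral_mono_on hab hpdf intervalIntegrable_const
      fun t ht ↦ gaussianPDFReal_le_of_abs_sub_le μ v <| by
        rw [habs ht, habs (left_mem_Icc.2 hab)]; linarith [ht.1]

lemma gaussianReal_real_Ioc_neg {v : ℝ≥0} (hv : v ≠ 0) (a b : ℝ) :
    (gaussianReal 0 v).real (Ioc (-b) (-a)) = (gaussianReal 0 v).real (Ioc a b) := by
  have := nullSingletonClass_gaussianReal (μ := 0) hv
  have hpre : (fun x : ℝ ↦ -x) ⁻¹' Ioc (-b) (-a) = Ico a b := by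
    ext t; simp
  calc (gaussianReal 0 v).real (Ioc (-b) (-a))
      = ((gaussianReal 0 v).map (-·)).real (Ioc (-b) (-a)) := by
        rw [gaussianReal_map_neg, neg_zero]
    _ = (gaussianReal 0 v).real (Ico a b) := by
        rw [map_measureReal_apply measurable_neg measurableSet_Ioc, hpre]
    _ = (gaussianReal 0 v).real (Ioc a b) := measureReal_congr Ico_ae_eq_Ioc

lemma gaussCDF_eq_real_Iic_div {σ : ℝ} (hσ : 0 < σ) (x : ℝ) :
    gaussCDF σ x = (gaussianReal 0 1).real (Iic (x / σ)) := by
  have hvar : (σ ^ 2).toNNReal = .mk (σ ^ 2) (sq_nonneg σ) := by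
    ext; simp [sq_nonneg]
  have hmap := gaussianReal_map_const_mul (μ := 0) (v := 1) σ
  rw [mul_zero, mul_one, ← hvar] at hmap
  have hpre : (σ * ·) ⁻¹' Iic x = Iic (x / σ) := by
    ext t; simp [le_div_iff₀' hσ]
  rw [gaussCDF, ← hmap, ← measureReal_def,
    map_measureReal_apply (measurable_const_mul σ) measurableSet_Iic, hpre]

lemma sign_mul_gaussCDF_sub_gaussCDF_one {σ : ℝ} (hσ0 : 0 < σ) (hσ1 : σ ≤ 1) (x : ℝ) :
    Real.sign x * (gaussCDF σ x - gaussCDF 1 x) = (gaussianReal 0 1).real (Ioc |x| (|x| / σ)) := by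
  have hIoc {a b : ℝ} (hab : a ≤ b) :
      (gaussianReal 0 1).real (Iic b) - (gaussianReal 0 1).real (Iic a) =
        (gaussianReal 0 1).real (Ioc a b) := by
    rw [← measureReal_sdiff (Iic_subset_Iic.2 hab) measurableSet_Iic, Iic_sdiff_Iic]
  simp only [gaussCDF_eq_real_Iic_div hσ0, gaussCDF_eq_real_Iic_div one_pos, div_one]
  rcases lt_trichotomy x 0 with hx | rfl | hx
  · have hle : x / σ ≤ x := (div_le_iff₀ hσ0).2 (by nlinarith)
    rw [Real.sign_of_neg hx, neg_one_mul, neg_sub, hIoc hle, abs_of_neg hx,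
      ← gaussianReal_real_Ioc_neg one_ne_zero, neg_div]
  · simp
  · have hle : x ≤ x / σ := le_div_self hx.le hσ0 hσ1
    rw [Real.sign_of_pos hx, one_mul, hIoc hle, abs_of_pos hx]

lemma div_sub_self_mem_Icc {y σ : ℝ} (hy : 0 ≤ y) (hσ0 : 0 < σ) (hσ1 : σ < 1)
    (hσ2 : 1 / 2 ≤ σ ^ 2) :
    y * (1 - σ ^ 2) / 2 ≤ y / σ - y ∧ y / σ - y ≤ y * (1 - σ ^ 2) := by
  have h : y / σ - y = y * (1 - σ ^ 2) / (σ * (1 + σ)) := by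
    field_simp; ring
  have hσσ : 1 ≤ σ * (1 + σ) := by nlinarith
  have hy' : 0 ≤ y * (1 - σ ^ 2) := mul_nonneg hy (by nlinarith)
  rw [h]
  constructor
  · exact div_le_div_of_nonneg_left hy' (by positivity) (by nlinarith)
  · exact div_le_self hy' hσσ

/-- Fix `x ≠ 0`. There are `c, C, δ > 0` (depending only on `x`) such
that for all `σ ∈ (0,1)` with `1 − σ² ≤ δ`:
`c·(1−σ²) ≤ sgn(x)·(Φ_σ(x) − Φ(x)) ≤ C·(1−σ²)`. -/
theorem gaussCDF_variance_perturbation (x : ℝ) (hx : x ≠ 0) :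
    ∃ c > (0 : ℝ), ∃ C > (0 : ℝ), ∃ δ > (0 : ℝ), ∀ σ : ℝ, 0 < σ → σ < 1 →
      1 - σ ^ 2 ≤ δ →
        c * (1 - σ ^ 2) ≤ Real.sign x * (gaussCDF σ x - gaussCDF 1 x) ∧
        Real.sign x * (gaussCDF σ x - gaussCDF 1 x) ≤ C * (1 - σ ^ 2) := by
  set y := |x|
  have hy : 0 < y := abs_pos.2 hx
  have hφ (t : ℝ) : 0 < gaussianPDFReal 0 1 t := gaussianPDFReal_pos 0 1 t one_ne_zero
  refine ⟨y * gaussianPDFReal 0 1 (2 * y) / 2, by have := hφ (2 * y); positivity,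
    y * gaussianPDFReal 0 1 y, by have := hφ y; positivity, 1 / 2, by norm_num, ?_⟩
  intro σ hσ0 hσ1 hδ
  have hσ2 : 1 / 2 ≤ σ ^ 2 := by linarith
  rw [sign_mul_gaussCDF_sub_gaussCDF_one hσ0 hσ1.le]
  obtain ⟨hlenlo, hlenhi⟩ := div_sub_self_mem_Icc hy.le hσ0 hσ1 hσ2
  have hyσ : y ≤ y / σ := le_div_self hy.le hσ0 hσ1.le
  obtain ⟨hlo, hhi⟩ := gaussianReal_real_Ioc_le one_ne_zero hy.le hyσ
  have hφ2y : gaussianPDFReal 0 1 (2 * y) ≤ gaussianPDFReal 0 1 (y / σ) :=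
    gaussianPDFReal_le_of_abs_sub_le 0 1 <| by
      rw [sub_zero, sub_zero, abs_of_pos (by positivity), abs_of_pos (by positivity),
        div_le_iff₀ hσ0]
      nlinarith
  constructor
  · calc y * gaussianPDFReal 0 1 (2 * y) / 2 * (1 - σ ^ 2)
        = y * (1 - σ ^ 2) / 2 * gaussianPDFReal 0 1 (2 * y) := by ring
      _ ≤ (y / σ - y) * gaussianPDFReal 0 1 (y / σ) :=
        mul_le_mul hlenlo hφ2y (hφ _).le (by linarith)
      _ ≤ _ := hlo
  · calc _ ≤ (y / σ - y) * gaussianPDFReal 0 1 y := hhi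
      _ ≤ y * (1 - σ ^ 2) * gaussianPDFReal 0 1 y := by gcongr; exact (hφ y).le
      _ = y * gaussianPDFReal 0 1 y * (1 - σ ^ 2) := by ring
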